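/- Let (f_t)_{t≥0} be a sequence of Fréchet-differentiable functions of weights W = (w^(1), …, w^(m)) and parameters g, each positively scale-invariant in W. Fix an index i, and let sequences (W_t, g_t) satisfy the gradient-type update w_{t+1}^(i) = w_t^(i) − c_t · ∇_{w^(i)} f_t(W_t, g_t) for arbitrary real coefficients c_t (with all blocks of every W_t nonzero, and g_{t+1} arbitrary). Then the sequence of block norms ‖w_t^(i)‖ is nondecreasing in t. -/

import Mathlib

open MeasureTheory RealInnerProductSpace
open scoped BigOperators

noncomputable section

/-- The space of weight tuples `W = (w⁽¹⁾, …, w⁽ᵐ⁾)` with `w⁽ⁱ⁾ ∈ ℝ^{dᵢ}`. -/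
abbrev Wsp (m : ℕ) (d : Fin m → ℕ) : Type :=
  PiLp 2 fun i : Fin m => EuclideanSpace ℝ (Fin (d i))

/-- The space of extra parameters `g ∈ ℝᵖ`. -/
abbrev Gsp (p : ℕ) : Type := EuclideanSpace ℝ (Fin p)

/-- Blockwise positive rescaling `T_a(W) = (a₁ w⁽¹⁾, …, a_m w⁽ᵐ⁾)`. -/
def rescale {m : ℕ} {d : Fin m → ℕ} (a : Fin m → ℝ) (W : Wsp m d) : Wsp m d :=
  WithLp.toLp 2 fun i => a i • W i

/-- `f` is positively scale-invariant in the weights. -/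
def PSI {m p : ℕ} {d : Fin m → ℕ} (f : Wsp m d → Gsp p → ℝ) : Prop :=
  ∀ a : Fin m → ℝ, (∀ i, 0 < a i) → ∀ W g, f (rescale a W) g = f W g

/-- Partial (Fréchet) gradient of `f` in the `i`-th weight block. -/
def gradW {m p : ℕ} {d : Fin m → ℕ} (f : Wsp m d → Gsp p → ℝ)
    (W : Wsp m d) (g : Gsp p) (i : Fin m) : EuclideanSpace ℝ (Fin (d i)) :=
  gradient (fun v => f (WithLp.toLp 2 (Function.update W i v)) g) (W i)

/-! Positive scale invariance in a block makes the partial gradient orthogonal to that block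
(Euler's identity for functions homogeneous of degree zero: `s ↦ F (s • x)` is constant, so its
derivative `F' x x` at `s = 1` vanishes). A gradient-type step therefore adds a vector orthogonal
to the current block, and by Pythagoras the block norm cannot decrease. -/

theorem fderiv_apply_self_eq_zero_of_smul_invariant {E G : Type*} [NormedAddCommGroup E]
    [NormedSpace ℝ E] [NormedAddCommGroup G] [NormedSpace ℝ G] {F : E → G} {x : E}
    (hF : ∀ s : ℝ, 0 < s → F (s • x) = F x) : fderiv ℝ F x x = 0 := by
  by_cases hdiff : DifferentiableAt ℝ F x
  · have hray : HasDerivAt (fun s : ℝ => s • x) x 1 := by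
      simpa using (hasDerivAt_id (1 : ℝ)).smul_const x
    have hline : HasDerivAt (fun s : ℝ => F (s • x)) (fderiv ℝ F x x) 1 :=
      hdiff.hasFDerivAt.comp_hasDerivAt_of_eq 1 hray (one_smul ℝ x).symm
    have hconst : HasDerivAt (fun s : ℝ => F (s • x)) 0 1 :=
      (hasDerivAt_const (1 : ℝ) (F x)).congr_of_eventuallyEq <| by
        filter_upwards [Ioi_mem_nhds one_pos] with s hs using hF s hs
    exact hline.unique hconst
  · rw [fderiv_zero_of_not_differentiableAt hdiff, zero_apply]

theorem inner_self_gradient_eq_zero_of_smul_invariant {E : Type*} [NormedAddCommGroup E]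
    [InnerProductSpace ℝ E] [CompleteSpace E] {F : E → ℝ} {x : E}
    (hF : ∀ s : ℝ, 0 < s → F (s • x) = F x) : ⟪x, gradient F x⟫ = 0 := by
  rw [inner_gradient_right, fderiv_apply_self_eq_zero_of_smul_invariant hF, map_zero]

theorem norm_le_norm_sub_smul_of_inner_eq_zero {E : Type*} [NormedAddCommGroup E]
    [InnerProductSpace ℝ E] {x v : E} (h : ⟪x, v⟫ = 0) (c : ℝ) : ‖x‖ ≤ ‖x - c • v‖ := by
  have horth : ⟪x, c • v⟫ = 0 := by rw [inner_smul_right, h, mul_zero]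
  have hpyth := norm_sub_sq_eq_norm_sq_add_norm_sq_real horth
  exact le_of_pow_le_pow_left₀ two_ne_zero (norm_nonneg _) (by nlinarith [sq_nonneg ‖c • v‖])

section

variable {m p : ℕ} {d : Fin m → ℕ}

theorem rescale_update_one (W : Wsp m d) (i : Fin m) (s : ℝ) :
    rescale (Function.update 1 i s) W = WithLp.toLp 2 (Function.update W i (s • W i)) := by
  ext j
  rcases eq_or_ne j i with rfl | hj
  · simp [rescale]
  · simp [rescale, Function.update_of_ne hj]

theorem PSI.apply_update_smul {f : Wsp m d → Gsp p → ℝ} (hf : PSI f) (W : Wsp m d) (g : Gsp p)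
    (i : Fin m) {s : ℝ} (hs : 0 < s) :
    f (WithLp.toLp 2 (Function.update W i (s • W i))) g = f W g := by
  rw [← rescale_update_one]
  refine hf _ (fun j => ?_) W g
  rcases eq_or_ne j i with rfl | hj
  · simpa using hs
  · simp [Function.update_of_ne hj]

theorem PSI.inner_gradW_eq_zero {f : Wsp m d → Gsp p → ℝ} (hf : PSI f) (W : Wsp m d)
    (g : Gsp p) (i : Fin m) : ⟪W i, gradW f W g i⟫ = 0 :=
  inner_self_gradient_eq_zero_of_smul_invariant fun _ hs => by
    simpa using hf.apply_update_smul W g i hs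

end

theorem stmt4_general {m p : ℕ} {d : Fin m → ℕ} (f : ℕ → Wsp m d → Gsp p → ℝ)
    (hPSI : ∀ t, PSI (f t))
    (i : Fin m) (W : ℕ → Wsp m d) (g : ℕ → Gsp p) (c : ℕ → ℝ)
    (hupd : ∀ t, W (t + 1) i = W t i - c t • gradW (f t) (W t) (g t) i) :
    Monotone fun t => ‖W t i‖ := by
  refine monotone_nat_of_le_succ fun t => ?_
  rw [hupd t]
  exact norm_le_norm_sub_smul_of_inner_eq_zero ((hPSI t).inner_gradW_eq_zero _ _ _) _

/-- For a sequence of Fréchet-differentiable, positively scale-invariant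
functions `f_t` and iterates following a gradient-type update in block `i` with
arbitrary real coefficients, the block norms `‖w_t⁽ⁱ⁾‖` are nondecreasing in `t`. -/
theorem stmt4 {m p : ℕ} {d : Fin m → ℕ} (f : ℕ → Wsp m d → Gsp p → ℝ)
    (hdiff : ∀ t, Differentiable ℝ fun q : Wsp m d × Gsp p => f t q.1 q.2)
    (hPSI : ∀ t, PSI (f t))
    (i : Fin m) (W : ℕ → Wsp m d) (g : ℕ → Gsp p) (c : ℕ → ℝ)
    (hnz : ∀ t j, W t j ≠ 0)
    (hupd : ∀ t, W (t + 1) i = W t i - c t • gradW (f t) (W t) (g t) i) :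
    Monotone fun t => ‖W t i‖ :=
  stmt4_general f hPSI i W g c hupd

end
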